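/- Let n ≥ 2 be an integer not divisible by 3, and let X be a finite nonempty subset of S^{n-1} ⊆ ℝ^n with 6·|X| = (n+1)(n+2). Then X is a spherical design of harmonic index 4 if and only if ⟨x, y⟩² = 3/(n+4) for all distinct x, y ∈ X (i.e., every inner product between distinct points of X equals √(3/(n+4)) or −√(3/(n+4))). -/

import Mathlib

open scoped BigOperators Classical

/-- The Laplacian `∑ i, ∂²/∂xᵢ²` of a multivariate polynomial. -/
noncomputable def mvLaplacian {n : ℕ} (f : MvPolynomial (Fin n) ℝ) : MvPolynomial (Fin n) ℝ :=
  ∑ i, MvPolynomial.pderiv i (MvPolynomial.pderiv i f)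

/-- A finite nonempty subset `X` of the unit sphere `S^{n-1} ⊆ ℝ^n` is a spherical design of
harmonic index `t` if `∑_{x ∈ X} f(x) = 0` for every harmonic homogeneous polynomial `f`
of degree `t`. -/
def IsHarmonicIndexDesign (n t : ℕ) (X : Finset (Fin n → ℝ)) : Prop :=
  X.Nonempty ∧ (∀ x ∈ X, ∑ i, x i ^ 2 = 1) ∧
    ∀ f : MvPolynomial (Fin n) ℝ, mvLaplacian f = 0 → f.IsHomogeneous t →
      ∑ x ∈ X, MvPolynomial.eval x f = 0

open MvPolynomial Finset

namespace THID

variable {n : ℕ}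

/-- `∏ i, (m i)!` as a real number. -/
noncomputable def mfact {n : ℕ} (m : Fin n →₀ ℕ) : ℝ := ∏ i, ((m i).factorial : ℝ)

lemma mfact_pos (m : Fin n →₀ ℕ) : 0 < mfact m :=
  Finset.prod_pos fun i _ => by positivity

lemma mfact_add_single (m : Fin n →₀ ℕ) (j : Fin n) :
    mfact (m + Finsupp.single j 1) = (m j + 1) * mfact m := by
  unfold mfact
  have key : ∀ i : Fin n, (((m + Finsupp.single j 1 : Fin n →₀ ℕ) i).factorial : ℝ)
      = (if i = j then ((m j : ℝ) + 1) else 1) * ((m i).factorial : ℝ) := by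
    intro i
    rw [Finsupp.add_apply]
    rcases eq_or_ne i j with rfl | hij
    · simp [Nat.factorial_succ]
    · simp [Finsupp.single_apply, Ne.symm hij, hij]
  rw [Finset.prod_congr rfl (fun i _ => key i), Finset.prod_mul_distrib]
  simp

/-- The apolar pairing on real multivariate polynomials. -/
noncomputable def pair (f g : MvPolynomial (Fin n) ℝ) : ℝ :=
  ∑ m ∈ f.support, f.coeff m * g.coeff m * mfact m

lemma pair_comm (f g : MvPolynomial (Fin n) ℝ) : pair f g = pair g f := by
  have h1 : pair f g = ∑ m ∈ f.support ∪ g.support, f.coeff m * g.coeff m * mfact m :=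
    Finset.sum_subset Finset.subset_union_left
      (fun m _ hm => by rw [MvPolynomial.notMem_support_iff.mp hm]; ring)
  have h2 : pair g f = ∑ m ∈ f.support ∪ g.support, g.coeff m * f.coeff m * mfact m :=
    Finset.sum_subset Finset.subset_union_right
      (fun m _ hm => by rw [MvPolynomial.notMem_support_iff.mp hm]; ring)
  rw [h1, h2]
  exact Finset.sum_congr rfl fun m _ => by ring

lemma pair_add_right (f g h : MvPolynomial (Fin n) ℝ) :
    pair f (g + h) = pair f g + pair f h := by
  unfold pair
  rw [← Finset.sum_add_distrib]
  exact Finset.sum_congr rfl fun m _ => by rw [MvPolynomial.coeff_add]; ring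

lemma pair_zero_right (f : MvPolynomial (Fin n) ℝ) : pair f 0 = 0 := by
  unfold pair; simp

lemma pair_zero_left (f : MvPolynomial (Fin n) ℝ) : pair 0 f = 0 := by
  rw [pair_comm]; exact pair_zero_right f

lemma pair_add_left (f g h : MvPolynomial (Fin n) ℝ) :
    pair (f + g) h = pair f h + pair g h := by
  rw [pair_comm, pair_add_right, pair_comm h f, pair_comm h g]

lemma pair_sub_right (f g h : MvPolynomial (Fin n) ℝ) :
    pair f (g - h) = pair f g - pair f h := by
  unfold pair
  rw [← Finset.sum_sub_distrib]
  exact Finset.sum_congr rfl fun m _ => by rw [MvPolynomial.coeff_sub]; ring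

lemma pair_C_mul_right (f g : MvPolynomial (Fin n) ℝ) (c : ℝ) :
    pair f (C c * g) = c * pair f g := by
  unfold pair
  rw [Finset.mul_sum]
  exact Finset.sum_congr rfl fun m _ => by rw [MvPolynomial.coeff_C_mul]; ring

lemma pair_C_mul_left (f g : MvPolynomial (Fin n) ℝ) (c : ℝ) :
    pair (C c * f) g = c * pair f g := by
  rw [pair_comm, pair_C_mul_right, pair_comm]

lemma pair_sum_right {ι : Type*} (s : Finset ι) (f : MvPolynomial (Fin n) ℝ)
    (g : ι → MvPolynomial (Fin n) ℝ) :
    pair f (∑ i ∈ s, g i) = ∑ i ∈ s, pair f (g i) := by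
  induction s using Finset.cons_induction with
  | empty => simp [pair_zero_right]
  | cons a s ha ih => rw [Finset.sum_cons, Finset.sum_cons, pair_add_right, ih]

lemma pair_sum_left {ι : Type*} (s : Finset ι) (f : MvPolynomial (Fin n) ℝ)
    (g : ι → MvPolynomial (Fin n) ℝ) :
    pair (∑ i ∈ s, g i) f = ∑ i ∈ s, pair (g i) f := by
  rw [pair_comm, pair_sum_right]
  exact Finset.sum_congr rfl fun i _ => pair_comm _ _

lemma pair_monomial_left (m : Fin n →₀ ℕ) (c : ℝ) (g : MvPolynomial (Fin n) ℝ) :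
    pair (monomial m c) g = c * g.coeff m * mfact m := by
  unfold pair
  by_cases hc : c = 0
  · simp [hc]
  · rw [MvPolynomial.support_monomial]
    simp [hc, MvPolynomial.coeff_monomial]

lemma pair_self_nonneg (f : MvPolynomial (Fin n) ℝ) : 0 ≤ pair f f := by
  unfold pair
  exact Finset.sum_nonneg fun m _ => by
    have := mfact_pos m; nlinarith [sq_nonneg (f.coeff m)]

lemma eq_zero_of_pair_self (f : MvPolynomial (Fin n) ℝ) (h : pair f f = 0) : f = 0 := by
  by_contra hf
  obtain ⟨m, hm⟩ := (MvPolynomial.ne_zero_iff.mp hf)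
  have hmem : m ∈ f.support := MvPolynomial.mem_support_iff.mpr hm
  have hlt : 0 < f.coeff m * f.coeff m * mfact m :=
    mul_pos (mul_self_pos.mpr hm) (mfact_pos m)
  have hpos : 0 < pair f f := by
    unfold pair
    exact Finset.sum_pos' (fun d _ => mul_nonneg (mul_self_nonneg _) (mfact_pos d).le)
      ⟨m, hmem, hlt⟩
  linarith

lemma coeff_pderiv (j : Fin n) (m : Fin n →₀ ℕ) (f : MvPolynomial (Fin n) ℝ) :
    (pderiv j f).coeff m = ((m j : ℝ) + 1) * f.coeff (m + Finsupp.single j 1) := by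
  have base : ∀ (d : Fin n →₀ ℕ) (c : ℝ),
      (pderiv j (monomial d c)).coeff m
        = ((m j : ℝ) + 1) * (monomial d c).coeff (m + Finsupp.single j 1) := by
    intro d c
    rw [pderiv_monomial, MvPolynomial.coeff_monomial, MvPolynomial.coeff_monomial]
    by_cases h : d = m + Finsupp.single j 1
    · have h1 : d - Finsupp.single j 1 = m := by
        rw [h]
        ext i
        rw [Finsupp.tsub_apply, Finsupp.add_apply]
        simp
      have h2 : d j = m j + 1 := by rw [h]; simp
      rw [if_pos h1, if_pos h, h2]
      push_cast; ring
    · rw [if_neg h, mul_zero]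
      rcases Nat.eq_zero_or_pos (d j) with hd | hd
      · rcases eq_or_ne (d - Finsupp.single j 1) m with h3 | h3
        · rw [if_pos h3, hd]; simp
        · rw [if_neg h3]
      · have h3 : d - Finsupp.single j 1 ≠ m := by
          intro h3
          apply h
          rw [← h3]
          ext i
          rw [Finsupp.add_apply, Finsupp.tsub_apply, Finsupp.single_apply]
          rcases eq_or_ne j i with rfl | hij
          · have : (if j = j then 1 else 0) = 1 := if_pos rfl
            rw [this]
            omega
          · simp [hij]
        rw [if_neg h3]
  conv_lhs => rw [f.as_sum]
  conv_rhs => rw [f.as_sum]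
  rw [map_sum, MvPolynomial.coeff_sum, MvPolynomial.coeff_sum, Finset.mul_sum]
  exact Finset.sum_congr rfl fun d _ => base d _

lemma pair_X_mul (j : Fin n) (q f : MvPolynomial (Fin n) ℝ) :
    pair (X j * q) f = pair q (pderiv j f) := by
  conv_lhs => rw [q.as_sum, Finset.mul_sum]
  conv_rhs => rw [q.as_sum]
  rw [pair_sum_left, pair_sum_left]
  refine Finset.sum_congr rfl fun m _ => ?_
  have hx : (X j : MvPolynomial (Fin n) ℝ) * monomial m (q.coeff m)
      = monomial (m + Finsupp.single j 1) (q.coeff m) := by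
    rw [X, monomial_mul, one_mul, add_comm]
  rw [hx, pair_monomial_left, pair_monomial_left, coeff_pderiv, mfact_add_single]
  ring

lemma pair_rr_mul (q f : MvPolynomial (Fin n) ℝ) :
    pair ((∑ j, (X j : MvPolynomial (Fin n) ℝ) ^ 2) * q) f = pair q (mvLaplacian f) := by
  rw [Finset.sum_mul, pair_sum_left]
  unfold mvLaplacian
  rw [pair_sum_right]
  refine Finset.sum_congr rfl fun j _ => ?_
  have : (X j : MvPolynomial (Fin n) ℝ) ^ 2 * q = X j * (X j * q) := by ring
  rw [this, pair_X_mul, pair_X_mul]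

lemma isHomogeneous_pderiv {k : ℕ} (j : Fin n) {f : MvPolynomial (Fin n) ℝ}
    (hf : f.IsHomogeneous (k + 1)) : (pderiv j f).IsHomogeneous k := by
  intro d hd
  rw [coeff_pderiv] at hd
  have h1 : f.coeff (d + Finsupp.single j 1) ≠ 0 := by
    intro h
    rw [h, mul_zero] at hd
    exact hd rfl
  have h2 := hf h1
  rw [map_add] at h2
  have h3 : (Finsupp.weight 1) (Finsupp.single j 1) = 1 := by
    rw [Finsupp.weight_apply, Finsupp.sum_single_index] <;> simp
  rw [h3] at h2
  omega

lemma eval_monomial' (x : Fin n → ℝ) (d : Fin n →₀ ℕ) (c : ℝ) :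
    eval x (monomial d c) = c * ∏ i, x i ^ d i := by
  rw [eval_monomial]
  congr 1
  refine Finset.prod_subset (Finset.subset_univ _) (fun i _ hi => ?_)
  rw [Finsupp.notMem_support_iff.mp hi]
  simp

lemma sum_univ_of_homog {k : ℕ} {f : MvPolynomial (Fin n) ℝ} (hf : f.IsHomogeneous k)
    {d : Fin n →₀ ℕ} (hd : d ∈ f.support) : ∑ i, d i = k := by
  have h1 := hf (MvPolynomial.mem_support_iff.mp hd)
  rw [Finsupp.weight_apply] at h1
  simp only [Finsupp.sum, Pi.one_apply, smul_eq_mul, mul_one] at h1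
  rw [← h1]
  exact (Finset.sum_subset (Finset.subset_univ d.support)
    (fun i _ hi => Finsupp.notMem_support_iff.mp hi)).symm

lemma euler (x : Fin n → ℝ) {k : ℕ} {f : MvPolynomial (Fin n) ℝ} (hf : f.IsHomogeneous k) :
    ∑ i, x i * eval x (pderiv i f) = (k : ℝ) * eval x f := by
  have key : ∀ d ∈ f.support, ∀ i : Fin n,
      x i * eval x (pderiv i (monomial d (f.coeff d)))
        = (d i : ℝ) * eval x (monomial d (f.coeff d)) := by
    intro d _ i
    rw [pderiv_monomial, eval_monomial', eval_monomial']
    rcases Nat.eq_zero_or_pos (d i) with hdi | hdi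
    · have h1 : d - Finsupp.single i 1 = d := by
        ext j
        rw [Finsupp.tsub_apply, Finsupp.single_apply]
        rcases eq_or_ne i j with rfl | hij
        · have h0 : (if i = i then 1 else 0) = 1 := if_pos rfl
          rw [h0]; omega
        · simp [hij]
      rw [h1, hdi]
      push_cast
      ring
    · have h1 : ∀ j ∈ Finset.univ.erase i, x j ^ ((d - Finsupp.single i 1 : Fin n →₀ ℕ) j) = x j ^ d j := by
        intro j hj
        have hj2 : j ≠ i := (Finset.mem_erase.mp hj).1
        congr 1
        rw [Finsupp.tsub_apply, Finsupp.single_apply, if_neg (Ne.symm hj2)]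
        omega
      have h2 : (d - Finsupp.single i 1 : Fin n →₀ ℕ) i = d i - 1 := by
        rw [Finsupp.tsub_apply, Finsupp.single_apply, if_pos rfl]
      rw [← Finset.mul_prod_erase _ _ (Finset.mem_univ i),
          ← Finset.mul_prod_erase _ (fun j => x j ^ d j) (Finset.mem_univ i),
          Finset.prod_congr rfl h1, h2]
      have h3 : x i * x i ^ (d i - 1) = x i ^ d i := by
        conv_rhs => rw [show d i = (d i - 1) + 1 by omega]
        rw [pow_succ']
      push_cast
      calc x i * (f.coeff d * (d i : ℝ) * (x i ^ (d i - 1) * ∏ j ∈ Finset.univ.erase i, x j ^ d j))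
          = (d i : ℝ) * (f.coeff d * (x i * x i ^ (d i - 1) * ∏ j ∈ Finset.univ.erase i, x j ^ d j)) := by
            ring
        _ = (d i : ℝ) * (f.coeff d * (x i ^ d i * ∏ j ∈ Finset.univ.erase i, x j ^ d j)) := by
            rw [h3]
  conv_lhs => rw [f.as_sum]
  conv_rhs => rw [f.as_sum]
  simp only [map_sum, Finset.mul_sum]
  rw [Finset.sum_comm]
  refine Finset.sum_congr rfl fun d hd => ?_
  calc ∑ i, x i * eval x (pderiv i (monomial d (f.coeff d)))
      = ∑ i, (d i : ℝ) * eval x (monomial d (f.coeff d)) :=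
        Finset.sum_congr rfl fun i _ => key d hd i
    _ = (k : ℝ) * eval x (monomial d (f.coeff d)) := by
        rw [← Finset.sum_mul, ← Nat.cast_sum, sum_univ_of_homog hf hd]

lemma pair_linpow (x : Fin n → ℝ) : ∀ (k : ℕ) (f : MvPolynomial (Fin n) ℝ), f.IsHomogeneous k →
    pair f ((∑ i, C (x i) * X i) ^ k) = (k.factorial : ℝ) * eval x f := by
  intro k
  induction k with
  | zero =>
    intro f hf
    rw [pow_zero, pair_comm]
    have h1 : (1 : MvPolynomial (Fin n) ℝ) = monomial 0 1 := by
      rw [MvPolynomial.monomial_zero']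
      simp
    rw [h1, pair_monomial_left]
    have hmf : mfact (0 : Fin n →₀ ℕ) = 1 := by
      unfold mfact
      simp
    have hsupp : f.support ⊆ {0} := by
      intro d hd
      have h2 := sum_univ_of_homog hf hd
      have h3 : d = 0 := by
        ext i
        exact Finset.sum_eq_zero_iff.mp h2 i (Finset.mem_univ i)
      simp [h3]
    have heval : eval x f = f.coeff 0 := by
      rw [eval_eq']
      rw [Finset.sum_subset hsupp (fun d _ hd => by
        rw [MvPolynomial.notMem_support_iff.mp hd]; ring)]
      simp
    rw [hmf, heval, Nat.factorial_zero]
    push_cast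
    ring
  | succ k ih =>
    intro f hf
    have hstep : (∑ i, C (x i) * X i : MvPolynomial (Fin n) ℝ) ^ (k + 1)
        = ∑ i, C (x i) * (X i * (∑ i, C (x i) * X i) ^ k) := by
      rw [pow_succ', Finset.sum_mul]
      exact Finset.sum_congr rfl fun i _ => by ring
    rw [hstep, pair_sum_right]
    have h1 : ∀ i : Fin n, pair f (C (x i) * (X i * (∑ i, C (x i) * X i) ^ k))
        = x i * ((k.factorial : ℝ) * eval x (pderiv i f)) := by
      intro i
      rw [pair_comm, pair_C_mul_left, pair_X_mul, pair_comm,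
        ih (pderiv i f) (isHomogeneous_pderiv i hf)]
    rw [Finset.sum_congr rfl fun i _ => h1 i]
    have h2 : ∑ i, x i * ((k.factorial : ℝ) * eval x (pderiv i f))
        = (k.factorial : ℝ) * ∑ i, x i * eval x (pderiv i f) := by
      rw [Finset.mul_sum]
      exact Finset.sum_congr rfl fun i _ => by ring
    rw [h2, euler x hf, Nat.factorial_succ]
    push_cast
    ring

/-! ### The polynomials `⟨x,ξ⟩` and `|ξ|²` -/

noncomputable def lin (n : ℕ) (x : Fin n → ℝ) : MvPolynomial (Fin n) ℝ := ∑ i, C (x i) * X i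

noncomputable def rr (n : ℕ) : MvPolynomial (Fin n) ℝ := ∑ i, X i ^ 2

lemma eval_lin (x y : Fin n → ℝ) : eval y (lin n x) = ∑ i, x i * y i := by
  simp [lin]

lemma eval_rr (y : Fin n → ℝ) : eval y (rr n) = ∑ i, y i ^ 2 := by
  simp [rr]

lemma lin_homog (x : Fin n → ℝ) : (lin n x).IsHomogeneous 1 :=
  IsHomogeneous.sum _ _ _ fun i _ => isHomogeneous_C_mul_X (x i) i

lemma rr_homog : (rr n).IsHomogeneous 2 :=
  IsHomogeneous.sum _ _ _ fun i _ => isHomogeneous_X_pow i 2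

lemma pderiv_lin (i : Fin n) (x : Fin n → ℝ) : pderiv i (lin n x) = C (x i) := by
  rw [lin, map_sum]
  rw [Finset.sum_eq_single i
    (fun j _ hj => by rw [pderiv_C_mul, pderiv_X_of_ne hj, mul_zero])
    (fun h => absurd (Finset.mem_univ i) h)]
  rw [pderiv_C_mul, pderiv_X_self, mul_one]

lemma pderiv_rr (i : Fin n) : pderiv i (rr n) = C 2 * X i := by
  rw [rr, map_sum]
  rw [Finset.sum_eq_single i
    (fun j _ hj => by rw [pderiv_pow, pderiv_X_of_ne hj, mul_zero])
    (fun h => absurd (Finset.mem_univ i) h)]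
  rw [pderiv_pow, pderiv_X_self, mul_one]
  norm_num
  rw [map_ofNat]

/-! ### Linearity and product rule for the Laplacian -/

lemma lap_add (f g : MvPolynomial (Fin n) ℝ) :
    mvLaplacian (f + g) = mvLaplacian f + mvLaplacian g := by
  unfold mvLaplacian
  rw [← Finset.sum_add_distrib]
  exact Finset.sum_congr rfl fun i _ => by rw [map_add, map_add]

lemma lap_sub (f g : MvPolynomial (Fin n) ℝ) :
    mvLaplacian (f - g) = mvLaplacian f - mvLaplacian g := by
  unfold mvLaplacian
  rw [← Finset.sum_sub_distrib]
  exact Finset.sum_congr rfl fun i _ => by rw [map_sub, map_sub]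

lemma lap_C_mul (c : ℝ) (f : MvPolynomial (Fin n) ℝ) :
    mvLaplacian (C c * f) = C c * mvLaplacian f := by
  unfold mvLaplacian
  rw [Finset.mul_sum]
  exact Finset.sum_congr rfl fun i _ => by rw [pderiv_C_mul, pderiv_C_mul]

lemma lap_sum {ι : Type*} (s : Finset ι) (g : ι → MvPolynomial (Fin n) ℝ) :
    mvLaplacian (∑ i ∈ s, g i) = ∑ i ∈ s, mvLaplacian (g i) := by
  induction s using Finset.cons_induction with
  | empty => simp [mvLaplacian]
  | cons a s ha ih => rw [Finset.sum_cons, Finset.sum_cons, lap_add, ih]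

lemma lap_mul (f g : MvPolynomial (Fin n) ℝ) :
    mvLaplacian (f * g) = mvLaplacian f * g + f * mvLaplacian g
      + 2 * ∑ i, pderiv i f * pderiv i g := by
  unfold mvLaplacian
  rw [Finset.sum_mul, Finset.mul_sum, Finset.mul_sum, ← Finset.sum_add_distrib,
    ← Finset.sum_add_distrib]
  refine Finset.sum_congr rfl fun i _ => ?_
  rw [pderiv_mul, map_add, pderiv_mul, pderiv_mul]
  ring

lemma lap_lin (x : Fin n → ℝ) : mvLaplacian (lin n x) = 0 := by
  unfold mvLaplacian
  refine Finset.sum_eq_zero fun i _ => ?_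
  rw [pderiv_lin, pderiv_C]

lemma sum_C_mul_X (x : Fin n → ℝ) (p : MvPolynomial (Fin n) ℝ) :
    ∑ i, C (x i) * (X i * p) = lin n x * p := by
  rw [lin, Finset.sum_mul]
  exact Finset.sum_congr rfl fun i _ => by ring

lemma C2_mul (c : ℝ) : (2 : MvPolynomial (Fin n) ℝ) * C c = C (2 * c) := by
  rw [map_mul, map_ofNat]

lemma lap_lin2 (x : Fin n → ℝ) :
    mvLaplacian (lin n x * lin n x) = C (2 * ∑ i, x i ^ 2) := by
  rw [lap_mul, lap_lin, zero_mul, mul_zero, zero_add, zero_add]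
  have h1 : ∀ i : Fin n, pderiv i (lin n x) * pderiv i (lin n x) = C (x i ^ 2) := by
    intro i
    rw [pderiv_lin, ← map_mul]
    ring_nf
  rw [Finset.sum_congr rfl fun i _ => h1 i, ← map_sum, C2_mul]

lemma lap_lin4 (x : Fin n → ℝ) :
    mvLaplacian ((lin n x * lin n x) * (lin n x * lin n x))
      = C (12 * ∑ i, x i ^ 2) * (lin n x * lin n x) := by
  rw [lap_mul, lap_lin2]
  have h2 : ∑ i, pderiv i (lin n x * lin n x) * pderiv i (lin n x * lin n x)
      = C (4 * ∑ i, x i ^ 2) * (lin n x * lin n x) := by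
    have h3 : ∀ i : Fin n, pderiv i (lin n x * lin n x) * pderiv i (lin n x * lin n x)
        = C (4 * x i ^ 2) * (lin n x * lin n x) := by
      intro i
      rw [pderiv_mul, pderiv_lin,
        show (4 : ℝ) * x i ^ 2 = x i * x i * 4 from by ring, map_mul, map_mul, map_ofNat]
      ring
    rw [Finset.sum_congr rfl fun i _ => h3 i, ← Finset.sum_mul, ← map_sum, ← Finset.mul_sum]
  rw [h2]
  have key : (C (2 * ∑ i, x i ^ 2) : MvPolynomial (Fin n) ℝ) + C (2 * ∑ i, x i ^ 2)
      + 2 * C (4 * ∑ i, x i ^ 2) = C (12 * ∑ i, x i ^ 2) := by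
    rw [C2_mul, ← map_add, ← map_add]
    congr 1
    ring
  calc C (2 * ∑ i, x i ^ 2) * (lin n x * lin n x)
        + (lin n x * lin n x) * C (2 * ∑ i, x i ^ 2)
        + 2 * (C (4 * ∑ i, x i ^ 2) * (lin n x * lin n x))
      = (C (2 * ∑ i, x i ^ 2) + C (2 * ∑ i, x i ^ 2) + 2 * C (4 * ∑ i, x i ^ 2))
          * (lin n x * lin n x) := by ring
    _ = C (12 * ∑ i, x i ^ 2) * (lin n x * lin n x) := by rw [key]

lemma lap_rr : mvLaplacian (rr n) = C (2 * (n : ℝ)) := by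
  unfold mvLaplacian
  have h1 : ∀ i : Fin n, pderiv i (pderiv i (rr n)) = C 2 := by
    intro i
    rw [pderiv_rr, pderiv_C_mul, pderiv_X_self, mul_one]
  rw [Finset.sum_congr rfl fun i _ => h1 i, Finset.sum_const, Finset.card_univ,
    Fintype.card_fin, nsmul_eq_mul]
  rw [show (2 : ℝ) * (n : ℝ) = (n : ℝ) * 2 from by ring, map_mul, map_natCast]

lemma lap_rr_lin2 (x : Fin n → ℝ) :
    mvLaplacian (rr n * (lin n x * lin n x))
      = (C (2 * (n : ℝ)) + C 8) * (lin n x * lin n x) + C (2 * ∑ i, x i ^ 2) * rr n := by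
  rw [lap_mul, lap_rr, lap_lin2]
  have h1 : ∑ i, pderiv i (rr n) * pderiv i (lin n x * lin n x)
      = C 2 * (lin n x * lin n x) * 2 := by
    have h2 : ∀ i : Fin n, pderiv i (rr n) * pderiv i (lin n x * lin n x)
        = C (x i) * (X i * lin n x) * (C 2 * 2) := by
      intro i
      rw [pderiv_rr, pderiv_mul, pderiv_lin]
      ring
    rw [Finset.sum_congr rfl fun i _ => h2 i, ← Finset.sum_mul, sum_C_mul_X]
    ring
  rw [h1]
  have h8 : (C 8 : MvPolynomial (Fin n) ℝ) = 2 * (2 * C 2) := by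
    rw [C2_mul, C2_mul]
    norm_num
  rw [h8]
  ring

lemma lap_rr2 : mvLaplacian (rr n * rr n) = (C (4 * (n : ℝ)) + C 8) * rr n := by
  rw [lap_mul, lap_rr]
  have h1 : ∑ i, pderiv i (rr n) * pderiv i (rr n) = C 2 * C 2 * rr n := by
    have h2 : ∀ i : Fin n, pderiv i (rr n) * pderiv i (rr n) = C 2 * C 2 * X i ^ 2 := by
      intro i
      rw [pderiv_rr]
      ring
    rw [Finset.sum_congr rfl fun i _ => h2 i, ← Finset.mul_sum, rr]
  rw [h1]
  have h4 : (C (4 * (n : ℝ)) : MvPolynomial (Fin n) ℝ) = C (2 * (n : ℝ)) + C (2 * (n : ℝ)) := by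
    rw [← map_add]
    congr 1
    ring
  have h8 : (C 8 : MvPolynomial (Fin n) ℝ) = 2 * (C 2 * C 2) := by
    rw [show (C 2 * C 2 : MvPolynomial (Fin n) ℝ) = C 4 from by rw [← map_mul]; norm_num, C2_mul]
    norm_num
  rw [h4, h8]
  ring

/-! ### The harmonic polynomial `⟨x,ξ⟩⁴ - c₁|ξ|²⟨x,ξ⟩² + c₂|ξ|⁴` -/

noncomputable def gpoly (n : ℕ) (c1 c2 : ℝ) (x : Fin n → ℝ) : MvPolynomial (Fin n) ℝ :=
  (lin n x * lin n x) * (lin n x * lin n x)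
    - C c1 * (rr n * (lin n x * lin n x)) + C c2 * (rr n * rr n)

lemma gpoly_homog (c1 c2 : ℝ) (x : Fin n → ℝ) : (gpoly n c1 c2 x).IsHomogeneous 4 := by
  have hA : ((lin n x * lin n x) * (lin n x * lin n x)).IsHomogeneous 4 :=
    ((lin_homog x).mul (lin_homog x)).mul ((lin_homog x).mul (lin_homog x))
  have hB : (C c1 * (rr n * (lin n x * lin n x))).IsHomogeneous 4 :=
    (rr_homog.mul ((lin_homog x).mul (lin_homog x))).C_mul c1
  have hC : (C c2 * (rr n * rr n)).IsHomogeneous 4 :=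
    (rr_homog.mul rr_homog).C_mul c2
  exact (hA.sub hB).add hC

lemma lap_gpoly (c1 c2 : ℝ) (x : Fin n → ℝ) (hs : ∑ i, x i ^ 2 = 1)
    (h1 : c1 * (2 * (n : ℝ) + 8) = 12) (h2 : c2 * (4 * (n : ℝ) + 8) = 2 * c1) :
    mvLaplacian (gpoly n c1 c2 x) = 0 := by
  unfold gpoly
  rw [lap_add, lap_sub, lap_C_mul, lap_C_mul, lap_lin4, lap_rr_lin2, lap_rr2, hs]
  have e1 : (C (12 * 1) : MvPolynomial (Fin n) ℝ) - C c1 * (C (2 * (n : ℝ)) + C 8) = 0 := by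
    rw [← map_add, ← map_mul, ← map_sub]
    have : (12 : ℝ) * 1 - c1 * (2 * (n : ℝ) + 8) = 0 := by linarith
    rw [this, map_zero]
  have e2 : (C c2 : MvPolynomial (Fin n) ℝ) * (C (4 * (n : ℝ)) + C 8) - C c1 * C (2 * 1) = 0 := by
    rw [← map_add, ← map_mul, ← map_mul, ← map_sub]
    have : c2 * (4 * (n : ℝ) + 8) - c1 * (2 * 1) = 0 := by linarith
    rw [this, map_zero]
  calc C (12 * 1) * (lin n x * lin n x)
        - C c1 * ((C (2 * (n : ℝ)) + C 8) * (lin n x * lin n x) + C (2 * 1) * rr n)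
        + C c2 * ((C (4 * (n : ℝ)) + C 8) * rr n)
      = (C (12 * 1) - C c1 * (C (2 * (n : ℝ)) + C 8)) * (lin n x * lin n x)
        + (C c2 * (C (4 * (n : ℝ)) + C 8) - C c1 * C (2 * 1)) * rr n := by ring
    _ = 0 := by rw [e1, e2, zero_mul, zero_mul, add_zero]

lemma eval_gpoly (c1 c2 : ℝ) (x y : Fin n → ℝ) :
    eval y (gpoly n c1 c2 x) = (∑ i, x i * y i) ^ 4
      - c1 * ((∑ i, y i ^ 2) * (∑ i, x i * y i) ^ 2) + c2 * (∑ i, y i ^ 2) ^ 2 := by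
  unfold gpoly
  simp only [map_add, map_sub, map_mul, eval_C, eval_lin, eval_rr]
  ring

lemma pair_lin4 (x : Fin n → ℝ) (f : MvPolynomial (Fin n) ℝ) (hf : f.IsHomogeneous 4) :
    pair f ((lin n x * lin n x) * (lin n x * lin n x)) = 24 * eval x f := by
  have h1 : (lin n x * lin n x) * (lin n x * lin n x) = (∑ i, C (x i) * X i) ^ 4 := by
    unfold lin
    ring
  rw [h1, pair_linpow x 4 f hf]
  norm_num [Nat.factorial]

lemma pair_rr_mul' (q f : MvPolynomial (Fin n) ℝ) :
    pair (rr n * q) f = pair q (mvLaplacian f) := by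
  unfold rr
  exact pair_rr_mul q f

end THID

/-- for `n ≥ 2` not divisible by `3` and `X ⊆ S^{n-1}` finite nonempty with
`6·|X| = (n+1)(n+2)`, `X` is a spherical design of harmonic index `4` iff
`⟨x,y⟩² = 3/(n+4)` for all distinct `x, y ∈ X`. -/
theorem tight_harmonic_index_four_design_iff (n : ℕ) (hn : 2 ≤ n) (hn3 : ¬ (3 ∣ n))
    (X : Finset (Fin n → ℝ)) (hXne : X.Nonempty) (hXsph : ∀ x ∈ X, ∑ i, x i ^ 2 = 1)
    (hcard : 6 * X.card = (n + 1) * (n + 2)) :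
    (IsHarmonicIndexDesign n 4 X ↔
      ∀ x ∈ X, ∀ y ∈ X, x ≠ y → (∑ i, x i * y i) ^ 2 = 3 / (n + 4)) := by
  classical
  set nr : ℝ := (n : ℝ) with hnr
  have hnr0 : 0 ≤ nr := Nat.cast_nonneg n
  have hn2 : nr + 2 ≠ 0 := by positivity
  have hn4 : nr + 4 ≠ 0 := by positivity
  set c1 : ℝ := 6 / (nr + 4) with hc1
  set c2 : ℝ := 3 / ((nr + 2) * (nr + 4)) with hc2
  set α : ℝ := 3 / (nr + 4) with hα
  set N : ℝ := (X.card : ℝ) with hNdef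
  have hN : 6 * N = (nr + 1) * (nr + 2) := by
    rw [hNdef, hnr]
    exact_mod_cast hcard
  have h1 : c1 * (2 * nr + 8) = 12 := by
    rw [hc1]
    field_simp
    ring
  have h2 : c2 * (4 * nr + 8) = 2 * c1 := by
    rw [hc2, hc1]
    field_simp
    ring
  have hc1α : c1 = 2 * α := by
    rw [hc1, hα]
    ring
  have hKey : N * (α ^ 2 - c2) = (1 - α) ^ 2 := by
    rw [hα, hc2]
    field_simp
    ring_nf
    linear_combination (nr + 1) * hN
  have hdot : ∀ x ∈ X, (∑ i, x i * x i) = 1 := by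
    intro x hx
    rw [← hXsph x hx]
    exact Finset.sum_congr rfl fun i _ => by ring
  have hcomm : ∀ x y : Fin n → ℝ, (∑ i, y i * x i) = ∑ i, x i * y i := by
    intro x y
    exact Finset.sum_congr rfl fun i _ => by ring
  have hevalg : ∀ y ∈ X, ∀ x ∈ X,
      MvPolynomial.eval x (THID.gpoly n c1 c2 y)
        = (∑ i, x i * y i) ^ 4 - c1 * (∑ i, x i * y i) ^ 2 + c2 := by
    intro y hy x hx
    rw [THID.eval_gpoly, hXsph x hx, hcomm x y]
    ring
  have hlapg : ∀ y ∈ X, mvLaplacian (THID.gpoly n c1 c2 y) = 0 := fun y hy =>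
    THID.lap_gpoly c1 c2 y (hXsph y hy) h1 h2
  have herase : ∀ x ∈ X, ((X.erase x).card : ℝ) = N - 1 := by
    intro x hx
    rw [Finset.card_erase_of_mem hx, Nat.cast_sub (Finset.card_pos.mpr hXne), hNdef]
    norm_num
  constructor
  · -- design → inner products
    rintro ⟨-, -, hD⟩
    intro x hx y hy hxy
    have hg0 : ∀ y ∈ X, ∑ x ∈ X, MvPolynomial.eval x (THID.gpoly n c1 c2 y) = 0 :=
      fun y hy => hD _ (hlapg y hy) (THID.gpoly_homog c1 c2 y)
    have hQ : ∑ y ∈ X, ∑ x ∈ X,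
        ((∑ i, x i * y i) ^ 4 - c1 * (∑ i, x i * y i) ^ 2 + c2) = 0 := by
      have e : (∑ y ∈ X, ∑ x ∈ X,
          ((∑ i, x i * y i) ^ 4 - c1 * (∑ i, x i * y i) ^ 2 + c2))
          = ∑ y ∈ X, ∑ x ∈ X, MvPolynomial.eval x (THID.gpoly n c1 c2 y) :=
        Finset.sum_congr rfl fun y hy => Finset.sum_congr rfl fun x hx =>
          (hevalg y hy x hx).symm
      rw [e]
      exact Finset.sum_eq_zero hg0
    have hF : ∑ y ∈ X, ∑ x ∈ X, ((∑ i, x i * y i) ^ 2 - α) ^ 2 = N * (1 - α) ^ 2 := by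
      have hFe : ∀ y ∈ X, ∀ x ∈ X, ((∑ i, x i * y i) ^ 2 - α) ^ 2
          = ((∑ i, x i * y i) ^ 4 - c1 * (∑ i, x i * y i) ^ 2 + c2) + (α ^ 2 - c2) := by
        intro y hy x hx
        rw [hc1α]
        ring
      rw [Finset.sum_congr rfl fun y hy => Finset.sum_congr rfl fun x hx => hFe y hy x hx]
      have e2 : ∀ y ∈ X, ∑ x ∈ X,
          (((∑ i, x i * y i) ^ 4 - c1 * (∑ i, x i * y i) ^ 2 + c2) + (α ^ 2 - c2))
          = (∑ x ∈ X, ((∑ i, x i * y i) ^ 4 - c1 * (∑ i, x i * y i) ^ 2 + c2))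
            + N * (α ^ 2 - c2) := by
        intro y hy
        rw [Finset.sum_add_distrib, Finset.sum_const, nsmul_eq_mul, hNdef]
      rw [Finset.sum_congr rfl e2, Finset.sum_add_distrib, hQ, Finset.sum_const,
        nsmul_eq_mul, ← hNdef, zero_add, ← mul_assoc, mul_comm N, mul_assoc, hKey]
    -- split diagonal off
    have hdiag : ∀ y ∈ X, ((∑ i, y i * y i) ^ 2 - α) ^ 2 = (1 - α) ^ 2 := by
      intro y hy
      rw [hdot y hy]
      norm_num
    have hsplit : ∑ y ∈ X, ∑ x ∈ X, ((∑ i, x i * y i) ^ 2 - α) ^ 2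
        = ∑ y ∈ X, (((∑ i, y i * y i) ^ 2 - α) ^ 2
            + ∑ x ∈ X.erase y, ((∑ i, x i * y i) ^ 2 - α) ^ 2) :=
      Finset.sum_congr rfl fun y hy =>
        (Finset.add_sum_erase X (fun x => ((∑ i, x i * y i) ^ 2 - α) ^ 2) hy).symm
    have hoff : ∑ y ∈ X, ∑ x ∈ X.erase y, ((∑ i, x i * y i) ^ 2 - α) ^ 2 = 0 := by
      have e3 : ∑ y ∈ X, (((∑ i, y i * y i) ^ 2 - α) ^ 2
          + ∑ x ∈ X.erase y, ((∑ i, x i * y i) ^ 2 - α) ^ 2)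
          = N * (1 - α) ^ 2
            + ∑ y ∈ X, ∑ x ∈ X.erase y, ((∑ i, x i * y i) ^ 2 - α) ^ 2 := by
        rw [Finset.sum_add_distrib, Finset.sum_congr rfl hdiag, Finset.sum_const,
          nsmul_eq_mul, hNdef]
      have := hF
      rw [hsplit, e3] at this
      linarith
    have hterm : ∀ y ∈ X, ∀ x ∈ X.erase y, ((∑ i, x i * y i) ^ 2 - α) ^ 2 = 0 := by
      have houter := (Finset.sum_eq_zero_iff_of_nonneg (fun y _ =>
        Finset.sum_nonneg fun x _ => sq_nonneg _)).mp hoff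
      intro y hy x hx
      exact (Finset.sum_eq_zero_iff_of_nonneg fun x _ => sq_nonneg _).mp (houter y hy) x hx
    have hx' : x ∈ X.erase y := Finset.mem_erase.mpr ⟨hxy, hx⟩
    have := hterm y hy x hx'
    have h5 := pow_eq_zero_iff (n := 2) (by norm_num) |>.mp this
    have h6 : (∑ i, x i * y i) ^ 2 = α := by linarith
    exact h6
  · -- inner products → design
    intro hA
    refine ⟨hXne, hXsph, ?_⟩
    intro f hΔf hf4
    set h : MvPolynomial (Fin n) ℝ := ∑ x ∈ X, THID.gpoly n c1 c2 x with hhdef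
    set p : MvPolynomial (Fin n) ℝ
      := ∑ x ∈ X, (THID.lin n x * THID.lin n x) * (THID.lin n x * THID.lin n x) with hpdef
    set w : MvPolynomial (Fin n) ℝ
      := ∑ x ∈ X, (MvPolynomial.C c2 * THID.rr n
          - MvPolynomial.C c1 * (THID.lin n x * THID.lin n x)) with hwdef
    have hdecomp : h = p + THID.rr n * w := by
      rw [hhdef, hpdef, hwdef, Finset.mul_sum, ← Finset.sum_add_distrib]
      refine Finset.sum_congr rfl fun x hx => ?_
      unfold THID.gpoly
      ring
    have hlap_h : mvLaplacian h = 0 := by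
      rw [hhdef, THID.lap_sum]
      exact Finset.sum_eq_zero hlapg
    have hhom_h : h.IsHomogeneous 4 := by
      rw [hhdef]
      exact MvPolynomial.IsHomogeneous.sum _ _ _ fun x _ => THID.gpoly_homog c1 c2 x
    -- the sum of h over X vanishes thanks to the inner product hypothesis
    have hsumh : ∑ y ∈ X, MvPolynomial.eval y h = 0 := by
      have hinner : ∀ y ∈ X, MvPolynomial.eval y h
          = (1 - c1 + c2) + (N - 1) * (α ^ 2 - c1 * α + c2) := by
        intro y hy
        rw [hhdef, map_sum]
        have e4 : ∀ x ∈ X, MvPolynomial.eval y (THID.gpoly n c1 c2 x)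
            = (∑ i, y i * x i) ^ 4 - c1 * (∑ i, y i * x i) ^ 2 + c2 := by
          intro x hx
          rw [THID.eval_gpoly, hXsph y hy, hcomm y x]
          ring
        rw [Finset.sum_congr rfl e4, ← Finset.add_sum_erase X _ hy]
        have e5 : ∀ x ∈ X.erase y, ((∑ i, y i * x i) ^ 4 - c1 * (∑ i, y i * x i) ^ 2 + c2)
            = α ^ 2 - c1 * α + c2 := by
          intro x hx
          have hxX : x ∈ X := Finset.mem_of_mem_erase hx
          have hxy : x ≠ y := (Finset.mem_erase.mp hx).1
          have e6 : (∑ i, y i * x i) ^ 2 = α := by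
            rw [hcomm x y]
            exact hA x hxX y hy hxy
          rw [show (∑ i, y i * x i) ^ 4 = ((∑ i, y i * x i) ^ 2) ^ 2 from by ring, e6]
        rw [Finset.sum_congr rfl e5, Finset.sum_const, nsmul_eq_mul, herase y hy,
          hdot y hy]
        ring
      rw [Finset.sum_congr rfl hinner, Finset.sum_const, nsmul_eq_mul, ← hNdef]
      have hz : (1 - c1 + c2) + (N - 1) * (α ^ 2 - c1 * α + c2) = 0 := by
        rw [hc1α]
        linear_combination -hKey
      rw [hz, mul_zero]
    have hpair_hh : THID.pair h h = 0 := by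
      have hrw : THID.pair h (THID.rr n * w) = 0 := by
        rw [THID.pair_comm, THID.pair_rr_mul', hlap_h, THID.pair_zero_right]
      have s1 : THID.pair h h = THID.pair h p := by
        nth_rewrite 2 [hdecomp]
        rw [THID.pair_add_right, hrw, add_zero]
      have s2 : THID.pair h p = ∑ x ∈ X, (24 * MvPolynomial.eval x h) := by
        rw [hpdef, THID.pair_sum_right]
        exact Finset.sum_congr rfl fun x _ => THID.pair_lin4 x h hhom_h
      rw [s1, s2, ← Finset.mul_sum, hsumh, mul_zero]
    have hzero : h = 0 := THID.eq_zero_of_pair_self h hpair_hh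
    have hfp : THID.pair f p = 0 := by
      have hps : p = h - THID.rr n * w := by
        rw [hdecomp]
        ring
      rw [hps, THID.pair_sub_right, hzero, THID.pair_zero_right,
        THID.pair_comm, THID.pair_rr_mul', hΔf, THID.pair_zero_right]
      ring
    have hfin : ∑ x ∈ X, (24 : ℝ) * MvPolynomial.eval x f = 0 := by
      have e7 : ∑ x ∈ X, (24 : ℝ) * MvPolynomial.eval x f
          = ∑ x ∈ X, THID.pair f
              ((THID.lin n x * THID.lin n x) * (THID.lin n x * THID.lin n x)) :=
        Finset.sum_congr rfl fun x _ => (THID.pair_lin4 x f hf4).symm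
      rw [e7, ← THID.pair_sum_right, ← hpdef, hfp]
    have hfin2 : (24 : ℝ) * ∑ x ∈ X, MvPolynomial.eval x f = 0 := by
      rw [Finset.mul_sum]
      exact hfin
    linarith
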